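/- arXiv:1610.03421 — 6 statements merged into one kernel-verified Lean document; each statement's English description precedes it below -/
import Mathlib

section
/- For any string w of length n ≥ 2, LPF[j] ≥ LPF[j-1] - 1 for all 2 ≤ j ≤ n, where LPF[j] is the maximum length ℓ such that there exists i < j with w[i..i+ℓ-1] = w[j..j+ℓ-1] (LPF[j] = 0 if no such factor exists). -/
/-- The set of candidate LPF values at position `j` in a string `w` of length `n`
(1-based indexing): `0` is always a candidate, and `ℓ > 0` is a candidate if the
substring `w[j..j+ℓ-1]` fits in the string and matches `w[i..i+ℓ-1]` for some `i < j`. -/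
def LPFSet {α : Type*} (w : ℕ → α) (n j : ℕ) : Set ℕ :=
  {ℓ | ℓ = 0 ∨ (j + ℓ ≤ n + 1 ∧ ∃ i, 1 ≤ i ∧ i < j ∧ ∀ k, k < ℓ → w (i + k) = w (j + k))}

/-- For any string of length `n ≥ 2`, `LPF[j] ≥ LPF[j-1] - 1` for all `2 ≤ j ≤ n`. -/
theorem stmt0 {α : Type*} (n : ℕ) (hn : 2 ≤ n) (w : ℕ → α) (LPF : ℕ → ℕ)
    (hLPF : ∀ j, 1 ≤ j → j ≤ n → IsGreatest (LPFSet w n j) (LPF j)) :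
    ∀ j, 2 ≤ j → j ≤ n → LPF (j - 1) - 1 ≤ LPF j := by
  intro j hj2 hjn
  set ℓ := LPF (j - 1) with hℓ
  rcases Nat.eq_zero_or_pos ℓ with h0 | hpos
  · simp [h0]
  have hmem : ℓ ∈ LPFSet w n (j - 1) :=
    (hLPF (j - 1) (by omega) (by omega)).1
  rcases hmem with h0 | ⟨hfit, i, hi1, hij, hmatch⟩
  · omega
  have hnew : ℓ - 1 ∈ LPFSet w n j := by
    right
    refine ⟨by omega, i + 1, by omega, by omega, ?_⟩
    intro k hk
    have := hmatch (k + 1) (by omega)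
    have e1 : i + 1 + k = i + (k + 1) := by omega
    have e2 : j + k = j - 1 + (k + 1) := by omega
    rw [e1, e2, this]
  exact (hLPF j (by omega) hjn).2 hnew
end

section
/- For any string w of length n ≥ 1 whose last character is unique, the sequence LPF[1]+1, LPF[2]+2, ..., LPF[n]+n is non-decreasing and bounded: 1 ≤ LPF[1]+1 and LPF[n]+n ≤ n. -/
/-- For a string of length `n ≥ 1` with a unique last character, the sequence
`LPF[j] + j` is non-decreasing, `1 ≤ LPF[1] + 1`, and `LPF[n] + n ≤ n`. -/
theorem stmt2 {α : Type*} (n : ℕ) (hn : 1 ≤ n) (w : ℕ → α) (LPF : ℕ → ℕ)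
    (hterm : ∀ i, 1 ≤ i → i < n → w i ≠ w n)
    (hLPF : ∀ j, 1 ≤ j → j ≤ n → IsGreatest (LPFSet w n j) (LPF j)) :
    (∀ j, 2 ≤ j → j ≤ n → LPF (j - 1) + (j - 1) ≤ LPF j + j) ∧
      1 ≤ LPF 1 + 1 ∧ LPF n + n ≤ n := by
  refine ⟨?_, le_add_self, ?_⟩
  · intro j hj2 hjn
    set ℓ := LPF (j - 1) with hℓ
    rcases Nat.eq_zero_or_pos ℓ with h0 | hpos
    · omega
    · have hmem := (hLPF (j - 1) (by omega) (by omega)).1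
      rw [← hℓ] at hmem
      rcases hmem with h0 | ⟨hle, i, hi1, hij, hmatch⟩
      · omega
      · have : ℓ - 1 ∈ LPFSet w n j := by
          right
          refine ⟨by omega, i + 1, by omega, by omega, ?_⟩
          intro k hk
          have := hmatch (k + 1) (by omega)
          have e1 : i + 1 + k = i + (k + 1) := by ring
          have e2 : j + k = j - 1 + (k + 1) := by omega
          rw [e1, e2]; exact this
        have := (hLPF j (by omega) hjn).2 this
        omega
  · have hmem := (hLPF n hn le_rfl).1
    rcases hmem with h0 | ⟨hle, i, hi1, hij, hmatch⟩
    · omega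
    · rcases Nat.eq_zero_or_pos (LPF n) with h0 | hpos
      · omega
      · have := hmatch 0 hpos
        simp at this
        exact absurd this (hterm i hi1 hij)
end

section
/- If the sequence of unary-coded increments I[1] = PLCP[1] and I[i] = PLCP[i] - PLCP[i-1] + 1 for 2 ≤ i ≤ n is written as 0^{I[i]}1 consecutively into a bit vector, then the total length of the bit vector is at most 2n, assuming PLCP[i] ≤ n - i for all i and PLCP[i]+i is non-decreasing in i. -/
/-- If `I[1] = PLCP[1]` and `I[i] = PLCP[i] - PLCP[i-1] + 1` for `2 ≤ i ≤ n`, where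
`PLCP[i] ≤ n - i` and `PLCP[i] + i` is non-decreasing, then the bit vector obtained by
writing `0^{I[i]} 1` for each `i` (of total length `n + Σ I[i]`) has length at most `2n` -/
theorem stmt3 (n : ℕ) (PLCP I : ℕ → ℕ)
    (hbound : ∀ i, 1 ≤ i → i ≤ n → PLCP i ≤ n - i)
    (hmono : ∀ i, 2 ≤ i → i ≤ n → PLCP (i - 1) ≤ PLCP i + 1)
    (hI1 : I 1 = PLCP 1)
    (hI : ∀ i, 2 ≤ i → i ≤ n → I i = PLCP i + 1 - PLCP (i - 1)) :
    n + ∑ i ∈ Finset.Icc 1 n, I i ≤ 2 * n := by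
  rcases Nat.eq_zero_or_pos n with hn | hn
  · simp [hn]
  have key : ∀ m, 1 ≤ m → m ≤ n → ∑ i ∈ Finset.Icc 1 m, I i = PLCP m + (m - 1) := by
    intro m hm1 hmn
    induction m with
    | zero => omega
    | succ k ih =>
      rcases Nat.eq_zero_or_pos k with hk | hk
      · subst hk; simp [hI1]
      · have hks : k + 1 ≤ n := hmn
        have h2 : 2 ≤ k + 1 := by omega
        rw [Finset.sum_Icc_succ_top (by omega : 1 ≤ k + 1),
            ih hk (by omega), hI (k + 1) h2 hks]
        have hm := hmono (k + 1) h2 hks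
        simp only [Nat.add_sub_cancel] at hm ⊢
        omega
  have hsum := key n hn le_rfl
  have hb := hbound n hn le_rfl
  omega
end

section
/- A string of length n contains at most 2n distinct squares, i.e., the number of distinct non-empty strings of the form SS that occur as substrings of a string of length n is at most 2n. -/
namespace Stmt5Aux

variable {α : Type*}




/-- `l` has period `d` (on indices where defined). -/
def per (l : List α) (d : ℕ) : Prop := ∀ i, i + d < l.length → l[i]? = l[i + d]?

lemma prefix_getElem? {s x : List α} (h : s <+: x) {i : ℕ} (hi : i < s.length) :
    s[i]? = x[i]? := by
  obtain ⟨t, rfl⟩ := h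
  rw [List.getElem?_append_left hi]

lemma sq_shift {u x : List α} (h : u ++ u <+: x) {i : ℕ} (hi : i < u.length) :
    x[i]? = x[i + u.length]? := by
  have h1 : (u ++ u)[i]? = x[i]? := prefix_getElem? h (by simp; omega)
  have h2 : (u ++ u)[i + u.length]? = x[i + u.length]? :=
    prefix_getElem? h (by simp; omega)
  rw [← h1, ← h2, List.getElem?_append_left (by omega),
    List.getElem?_append_right (by omega)]
  congr 1
  omega

lemma per_prefix {s t : List α} (h : s <+: t) {d : ℕ} (hp : per t d) : per s d := by
  intro i hi
  rw [prefix_getElem? h (by omega), prefix_getElem? h (by omega)]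
  exact hp i (by have := h.length_le; omega)

lemma per_of_squares {x s t : List α} (hs : s ++ s <+: x) (ht : t ++ t <+: x)
    (hst : s.length < t.length) : per s (t.length - s.length) := by
  intro i hi
  have h1 : s[i]? = x[i]? := prefix_getElem? (List.IsPrefix.trans ⟨s, rfl⟩ hs) (by omega)
  have h2 : s[i + (t.length - s.length)]? = x[i + (t.length - s.length)]? :=
    prefix_getElem? (List.IsPrefix.trans ⟨s, rfl⟩ hs) (by omega)
  rw [h1, h2, sq_shift ht (i := i) (by omega), sq_shift hs (i := i + (t.length - s.length)) (by omega)]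
  congr 1
  omega







lemma per_sub {l : List α} {P Q : ℕ} (hQP : Q < P) (hP : per l P) (hQ : per l Q)
    (hle : P + Q ≤ l.length) : per l (P - Q) := by
  intro i hi
  rcases lt_or_ge i Q with h | h
  · have h1 := hP i (by omega)
    have h2 := hQ (i + (P - Q)) (by omega)
    rw [h1, h2]
    congr 1
    omega
  · have h1 := hQ (i - Q) (by omega)
    have h2 := hP (i - Q) (by omega)
    have e1 : i - Q + Q = i := by omega
    have e2 : i - Q + P = i + (P - Q) := by omega
    rw [e1] at h1
    rw [e2] at h2
    rw [← h1, h2]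

lemma per_gcd {l : List α} : ∀ P Q : ℕ, 0 < P → 0 < Q → P + Q ≤ l.length →
    per l P → per l Q → per l (Nat.gcd P Q)
  | P, Q, hP, hQ, hle, hpP, hpQ => by
    rcases lt_trichotomy P Q with h | h | h
    · have hsub : per l (Q - P) := per_sub h hpQ hpP (by omega)
      have := per_gcd P (Q - P) hP (by omega) (by omega) hpP hsub
      rwa [Nat.gcd_sub_self_right (by omega)] at this
    · subst h
      rwa [Nat.gcd_self]
    · have hsub : per l (P - Q) := per_sub h hpP hpQ (by omega)
      have := per_gcd (P - Q) Q (by omega) hQ (by omega) hsub hpQ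
      rwa [Nat.gcd_sub_self_left (by omega)] at this
  termination_by P Q => P + Q

lemma per_grid {l : List α} {e : ℕ} (he : 0 < e) (h : per l e) :
    ∀ i, i < l.length → l[i]? = l[i % e]? := by
  intro i
  induction i using Nat.strong_induction_on with
  | _ i ih =>
    intro hi
    rcases lt_or_ge i e with hlt | hge
    · rw [Nat.mod_eq_of_lt hlt]
    · have h1 := h (i - e) (by omega)
      have e1 : i - e + e = i := by omega
      rw [e1] at h1
      have h2 := ih (i - e) (by omega) (by omega)
      rw [← h1, h2, Nat.mod_eq_sub_mod hge]

lemma infix_of_match {s x : List α} {d : ℕ} (hd : 1 ≤ d)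
    (h : ∀ j, j < s.length → s[j]? = x[d + j]?) : s <:+: x.drop 1 := by
  have hs : s = (x.drop d).take s.length := by
    apply List.ext_getElem?
    intro n
    rw [List.getElem?_take]
    split
    · rw [List.getElem?_drop]
      exact h n (by omega)
    · exact List.getElem?_eq_none (by omega)
  have h1 : s <+: x.drop d := hs ▸ List.take_prefix _ _
  have h2 : x.drop d <:+ x.drop 1 := by
    have : (x.drop 1).drop (d - 1) = x.drop d := by
      rw [List.drop_drop]
      congr 1
      omega
    exact this ▸ List.drop_suffix _ _
  exact h1.isInfix.trans h2.isInfix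







/-- Key three-squares lemma: the smallest of three square prefixes occurs again. -/
lemma key {x u v w : List α} (hu : u ≠ [])
    (huv : u.length < v.length) (hvw : v.length < w.length)
    (hux : u ++ u <+: x) (hvx : v ++ v <+: x) (hwx : w ++ w <+: x) :
    (u ++ u) <:+: x.drop 1 := by
  classical
  set a := u.length with ha
  set b := v.length with hb
  set c := w.length with hc
  have ha0 : 0 < a := List.length_pos_iff.mpr hu
  have hupre : u <+: x := List.IsPrefix.trans ⟨u, rfl⟩ hux
  have hvpre : v <+: x := List.IsPrefix.trans ⟨v, rfl⟩ hvx
  have Ea : ∀ i, i < a → x[i]? = x[i + a]? := fun i hi => sq_shift hux hi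
  have Eb : ∀ i, i < b → x[i]? = x[i + b]? := fun i hi => sq_shift hvx hi
  have Ec : ∀ i, i < c → x[i]? = x[i + c]? := fun i hi => sq_shift hwx hi
  have hlenx : 2 * c ≤ x.length := by
    have := hwx.length_le
    simpa [two_mul] using this
  rcases le_or_gt (2 * a) c with hcase | hcase
  · -- easy case: u++u occurs at offset c
    refine infix_of_match (d := c) (by omega) (fun j hj => ?_)
    have hj' : j < a + a := by simpa [List.length_append] using hj
    have h1 : (u ++ u)[j]? = x[j]? := prefix_getElem? hux hj
    have h2 := Ec j (by omega)
    rw [h1, h2]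
    congr 1
    omega
  · -- hard case: c < 2a
    set p := b - a with hp
    set q := c - b with hq
    have hp0 : 0 < p := by omega
    have hq0 : 0 < q := by omega
    have hpq : p + q < a := by omega
    have perp : per u p := per_of_squares hux hvx huv
    have perq' : per v q := per_of_squares hvx hwx hvw
    have huvpre : u <+: v := List.prefix_of_prefix_length_le hupre hvpre (by omega)
    have perq : per u q := per_prefix huvpre perq'
    -- minimal period of u
    have hex : ∃ d, 0 < d ∧ per u d := ⟨a, ha0, fun i hi => by omega⟩
    set e := Nat.find hex with he
    obtain ⟨he0, pere⟩ := Nat.find_spec hex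
    have hep : e ≤ p := Nat.find_min' hex ⟨hp0, perp⟩
    have heq : e ≤ q := Nat.find_min' hex ⟨hq0, perq⟩
    have hdvdp : e ∣ p := by
      have hg : per u (Nat.gcd p e) := per_gcd p e hp0 he0 (by omega) perp pere
      have h1 : e ≤ Nat.gcd p e := Nat.find_min' hex ⟨Nat.gcd_pos_of_pos_left e hp0, hg⟩
      have h2 : Nat.gcd p e ≤ e := Nat.le_of_dvd he0 (Nat.gcd_dvd_right p e)
      have : Nat.gcd p e = e := le_antisymm h2 h1
      exact this ▸ Nat.gcd_dvd_left p e
    have hdvdq : e ∣ q := by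
      have hg : per u (Nat.gcd q e) := per_gcd q e hq0 he0 (by omega) perq pere
      have h1 : e ≤ Nat.gcd q e := Nat.find_min' hex ⟨Nat.gcd_pos_of_pos_left e hq0, hg⟩
      have h2 : Nat.gcd q e ≤ e := Nat.le_of_dvd he0 (Nat.gcd_dvd_right q e)
      have : Nat.gcd q e = e := le_antisymm h2 h1
      exact this ▸ Nat.gcd_dvd_left q e
    have grid : ∀ i, i < a → u[i]? = u[i % e]? := per_grid he0 pere
    by_cases hr : a % e = 0
    · -- e divides a : occurrence of u++u at offset e
      have hdvda : e ∣ a := Nat.dvd_of_mod_eq_zero hr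
      have hdvdb : e ∣ b := by
        have : b = a + p := by omega
        rw [this]; exact Nat.dvd_add hdvda hdvdp
      have claim : ∀ j, j < 2 * a + e → x[j]? = u[j % e]? := by
        intro j hj
        rcases lt_or_ge j a with h1 | h1
        · rw [← prefix_getElem? hupre h1]
          exact grid j h1
        · rcases lt_or_ge j (2 * a) with h2 | h2
          · have hE := Ea (j - a) (by omega)
            have e1 : j - a + a = j := by omega
            rw [e1] at hE
            rw [← hE, ← prefix_getElem? hupre (show j - a < a by omega),
              grid (j - a) (by omega)]
            congr 1
            obtain ⟨k, hk⟩ := hdvda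
            conv_rhs => rw [show j = (j - a) + e * k by omega, Nat.add_mul_mod_self_left]
          · -- 2a ≤ j < 2a + e
            have hE := Eb (j - b) (by omega)
            have e1 : j - b + b = j := by omega
            rw [e1] at hE
            rw [← hE, ← prefix_getElem? hupre (show j - b < a by omega),
              grid (j - b) (by omega)]
            congr 1
            obtain ⟨k, hk⟩ := hdvdb
            conv_rhs => rw [show j = (j - b) + e * k by omega, Nat.add_mul_mod_self_left]
      refine infix_of_match (show 1 ≤ e by omega) (fun j hj => ?_)
      have hj' : j < a + a := by simpa [List.length_append] using hj
      have h1 : (u ++ u)[j]? = x[j]? := prefix_getElem? hux hj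
      rw [h1, claim j (by omega), claim (e + j) (by omega)]
      congr 1
      rw [show e + j = j + e by omega, Nat.add_mod_right]
    · -- a % e ≠ 0 : contradiction with minimality of e
      exfalso
      set r := a % e with hrdef
      have hr0 : 0 < r := Nat.pos_of_ne_zero hr
      have hre : r < e := Nat.mod_lt _ he0
      have rel : ∀ t, t < e → u[t]? = u[(t + r) % e]? := by
        intro t ht
        have htp : t < p := by omega
        have htq : t < q := by omega
        -- s := a + t
        have hv1 : v[a + t - q]? = v[a + t]? := by
          have := perq' (a + t - q) (by omega)
          have e1 : a + t - q + q = a + t := by omega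
          rwa [e1] at this
        have hx1 : x[a + t - q]? = x[a + t]? := by
          rw [← prefix_getElem? hvpre (show a + t - q < b by omega),
              ← prefix_getElem? hvpre (show a + t < b by omega)]
          exact hv1
        have hx2 : x[t]? = x[a + t]? := by
          have := Ea t (by omega)
          rwa [show t + a = a + t by omega] at this
        have hu1 : u[t]? = x[t]? := prefix_getElem? hupre (by omega)
        have hu2 : u[a + t - q]? = x[a + t - q]? :=
          prefix_getElem? hupre (by omega)
        have : u[t]? = u[a + t - q]? := by rw [hu1, hu2, hx1, ← hx2]
        rw [this, grid (a + t - q) (by omega)]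
        congr 1
        -- (a + t - q) % e = (t + r) % e
        obtain ⟨kq, hkq⟩ := hdvdq
        have h4 : (a + t - q) % e = (t + a) % e := by
          conv_rhs => rw [show t + a = (a + t - q) + e * kq by omega,
            Nat.add_mul_mod_self_left]
        have h5 : (t + r) % e = (t + a) % e := by
          rw [hrdef]
          conv_rhs => rw [Nat.add_mod]
          conv_lhs => rw [Nat.add_mod]
          simp
        rw [h4, h5]
      have perr : per u r := by
        intro i hi
        rw [grid i (by omega), grid (i + r) (by omega),
          rel (i % e) (Nat.mod_lt _ he0)]
        congr 1
        rw [Nat.add_mod i r e, Nat.mod_eq_of_lt hre]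
      exact Nat.find_min hex hre ⟨hr0, perr⟩







/-- No three distinct "new" squares at the front of a word. -/
lemma three {x : List α} {s1 s2 s3 : List α}
    (h1 : (∃ t, t ≠ [] ∧ s1 = t ++ t) ∧ s1 <+: x ∧ ¬ s1 <:+: x.drop 1)
    (h2 : (∃ t, t ≠ [] ∧ s2 = t ++ t) ∧ s2 <+: x ∧ ¬ s2 <:+: x.drop 1)
    (h3 : (∃ t, t ≠ [] ∧ s3 = t ++ t) ∧ s3 <+: x ∧ ¬ s3 <:+: x.drop 1)
    (l12 : s1.length < s2.length) (l23 : s2.length < s3.length) : False := by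
  obtain ⟨⟨t1, ht1, rfl⟩, hp1, hn1⟩ := h1
  obtain ⟨⟨t2, ht2, rfl⟩, hp2, hn2⟩ := h2
  obtain ⟨⟨t3, ht3, rfl⟩, hp3, hn3⟩ := h3
  simp only [List.length_append] at l12 l23
  exact hn1 (key ht1 (by omega) (by omega) hp1 hp2 hp3)

lemma new_card_le {x : List α} :
    {s : List α | (∃ t : List α, t ≠ [] ∧ s = t ++ t) ∧ s <+: x ∧ ¬ s <:+: x.drop 1}.ncard
      ≤ 2 := by
  set N := {s : List α | (∃ t : List α, t ≠ [] ∧ s = t ++ t) ∧ s <+: x ∧ ¬ s <:+: x.drop 1}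
    with hN
  have hfin : N.Finite := by
    apply (x.sublists.finite_toSet).subset
    intro s hs
    simp only [List.mem_sublists]
    exact hs.2.1.sublist
  by_contra h
  push_neg at h
  obtain ⟨a, ha, b, hb, c, hc, hab, hac, hbc⟩ := (Set.two_lt_ncard hfin).mp (by omega)
  have hlen : ∀ s1 s2 : List α, s1 ∈ N → s2 ∈ N → s1 ≠ s2 → s1.length ≠ s2.length := by
    intro s1 s2 hs1 hs2 hne heq
    exact hne (List.prefix_of_prefix_length_le hs1.2.1 hs2.2.1 heq.le |>.eq_of_length heq)
  have h1 := hlen a b ha hb hab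
  have h2 := hlen a c ha hc hac
  have h3 := hlen b c hb hc hbc
  rcases lt_trichotomy a.length b.length with hab' | hab' | hab' <;>
    rcases lt_trichotomy b.length c.length with hbc' | hbc' | hbc' <;>
      rcases lt_trichotomy a.length c.length with hac' | hac' | hac' <;>
        first
          | exact three ha hb hc hab' hbc'
          | exact three ha hc hb hac' (by omega)
          | exact three hb ha hc (by omega) (by omega)
          | exact three hb hc ha (by omega) (by omega)
          | exact three hc ha hb (by omega) (by omega)
          | exact three hc hb ha (by omega) (by omega)




end Stmt5Aux

/-- A string of length `n` contains at most `2n` distinct squares: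
the set of distinct non-empty strings of the form `t ++ t` occurring as substrings
of `w` has cardinality at most `2 * w.length`. -/
theorem stmt5 {α : Type*} (w : List α) :
    {s : List α | (∃ t : List α, t ≠ [] ∧ s = t ++ t) ∧ s <:+: w}.ncard
      ≤ 2 * w.length := by
  induction w with
  | nil =>
    have : {s : List α | (∃ t : List α, t ≠ [] ∧ s = t ++ t) ∧ s <:+: ([] : List α)} = ∅ := by
      ext s
      simp only [Set.mem_setOf_eq, Set.mem_empty_iff_false, iff_false, not_and]
      rintro ⟨t, ht, rfl⟩ hinf
      have := List.eq_nil_of_infix_nil hinf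
      simp only [List.append_eq_nil_iff] at this
      exact ht this.1
    rw [this]
    simp
  | cons a t ih =>
    set N := {s : List α | (∃ u : List α, u ≠ [] ∧ s = u ++ u) ∧ s <+: (a :: t)
      ∧ ¬ s <:+: (a :: t).drop 1} with hN
    have hsub : {s : List α | (∃ u : List α, u ≠ [] ∧ s = u ++ u) ∧ s <:+: (a :: t)} ⊆
        N ∪ {s : List α | (∃ u : List α, u ≠ [] ∧ s = u ++ u) ∧ s <:+: t} := by
      rintro s ⟨hsq, hinf⟩
      rcases List.infix_cons_iff.mp hinf with hpre | hinf'
      · by_cases h : s <:+: t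
        · exact Or.inr ⟨hsq, h⟩
        · exact Or.inl ⟨hsq, hpre, by simpa using h⟩
      · exact Or.inr ⟨hsq, hinf'⟩
    calc {s : List α | (∃ u : List α, u ≠ [] ∧ s = u ++ u) ∧ s <:+: (a :: t)}.ncard
        ≤ (N ∪ {s : List α | (∃ u : List α, u ≠ [] ∧ s = u ++ u) ∧ s <:+: t}).ncard := by
          have hf1 : N.Finite := ((a :: t).sublists.finite_toSet).subset (fun s hs => by
            simpa [List.mem_sublists] using hs.2.1.sublist)
          have hf2 : {s : List α | (∃ u : List α, u ≠ [] ∧ s = u ++ u) ∧ s <:+: t}.Finite :=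
            (t.sublists.finite_toSet).subset (fun s hs => by
              simpa [List.mem_sublists] using hs.2.sublist)
          exact Set.ncard_le_ncard hsub (hf1.union hf2)
      _ ≤ N.ncard + {s : List α | (∃ u : List α, u ≠ [] ∧ s = u ++ u) ∧ s <:+: t}.ncard :=
          Set.ncard_union_le _ _
      _ ≤ 2 + 2 * t.length := Nat.add_le_add Stmt5Aux.new_card_le ih
      _ ≤ 2 * (a :: t).length := by simp [List.length_cons]; omega
end

section
/- The leftmost occurrence of a square in a string w cannot be contained entirely within a single Lempel-Ziv factor: if (i, 2p) is the leftmost occurrence of the square w[i..i+2p-1] and f_x = w[b..e] is a Lempel-Ziv factor with b ≤ i and i+2p-1 ≤ e, then a contradiction follows (i.e., the square touches at least two factors). -/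
/-- The leftmost occurrence of a square cannot be contained in a single Lempel-Ziv
factor: if `(i, 2p)` is a leftmost square occurrence and `w[b..e]` is a factor with an
earlier occurrence whenever its length exceeds `1`, then `b ≤ i` and `i + 2p - 1 ≤ e`
lead to a contradiction. -/
theorem stmt13 {α : Type*} (w : ℕ → α) (i p b e : ℕ) (hp : 1 ≤ p) (hb : 1 ≤ b)
    (hsq : ∀ k, k < p → w (i + k) = w (i + p + k))
    (hleft : ¬ ∃ j, 1 ≤ j ∧ j < i ∧ ∀ k, k < 2 * p → w (j + k) = w (i + k))
    (hfac : b < e → ∃ j, 1 ≤ j ∧ j < b ∧ ∀ m, m ≤ e - b → w (j + m) = w (b + m))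
    (hbi : b ≤ i) (hie : i + 2 * p ≤ e + 1) :
    False := by
  have hbe : b < e := by omega
  obtain ⟨j, hj1, hjb, hjw⟩ := hfac hbe
  apply hleft
  refine ⟨j + (i - b), by omega, by omega, fun k hk => ?_⟩
  have h1 := hjw (i - b + k) (by omega)
  have h2 : b + (i - b + k) = i + k := by omega
  have h3 : j + (i - b) + k = j + (i - b + k) := by omega
  rw [h3, h1, h2]
end

section
/- Let w be a string, let q be a position, p ≥ 1, and let ℓ_R be the length of the longest common prefix of w[q..] and w[q+p..], and ℓ_L the length of the longest common suffix of w[..q-1] and w[..q+p-1]. If ℓ_L + ℓ_R ≥ p and ℓ_R > 0, then w contains a square of length 2p starting at position s = max(q - ℓ_L, q - p + 1), i.e., w[s..s+p-1] = w[s+p..s+2p-1]. -/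
/-- If `ℓR` is the longest common extension of `w[q..]` and `w[q+p..]` to the right,
`ℓL` the longest common extension of `w[..q-1]` and `w[..q+p-1]` to the left,
`ℓL + ℓR ≥ p` and `ℓR > 0`, then a square of length `2p` starts at
`s = max (q - ℓL) (q - p + 1)`. -/
theorem stmt14 {α : Type*} (n : ℕ) (w : ℕ → α) (q p ℓR ℓL : ℕ)
    (hq : 1 ≤ q) (hp : 1 ≤ p) (hqn : q + p ≤ n)
    (hR : IsGreatest {ℓ | q + p + ℓ ≤ n + 1 ∧ ∀ k, k < ℓ → w (q + k) = w (q + p + k)} ℓR)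
    (hL : IsGreatest {ℓ | ℓ < q ∧ ∀ k, k < ℓ → w (q - 1 - k) = w (q + p - 1 - k)} ℓL)
    (hsum : p ≤ ℓL + ℓR) (hRpos : 0 < ℓR) :
    ∀ k, k < p →
      w (max (q - ℓL) (q + 1 - p) + k) = w (max (q - ℓL) (q + 1 - p) + p + k) := by
  intro k hk
  have hLq : ℓL < q := hL.1.1
  set s := max (q - ℓL) (q + 1 - p) with hs
  have h1 : q - ℓL ≤ s + k := le_trans (le_max_left _ _) (Nat.le_add_right _ _)
  have h2 : s + k + 1 ≤ q + ℓR := by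
    have hs1 : q - ℓL ≤ q + ℓR - p := by omega
    have hs2 : q + 1 - p ≤ q + ℓR - p := by omega
    have hle : s ≤ q + ℓR - p := max_le hs1 hs2
    omega
  rcases lt_or_ge (s + k) q with h | h
  · have hj : q - 1 - (s + k) < ℓL := by omega
    have hw := hL.1.2 _ hj
    have e1 : q - 1 - (q - 1 - (s + k)) = s + k := by omega
    have e2 : q + p - 1 - (q - 1 - (s + k)) = s + p + k := by omega
    rw [e1, e2] at hw
    exact hw
  · have hj : s + k - q < ℓR := by omega
    have hw := hR.1.2 _ hj
    have e1 : q + (s + k - q) = s + k := by omega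
    have e2 : q + p + (s + k - q) = s + p + k := by omega
    rw [e1, e2] at hw
    exact hw
end
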